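/- arXiv:2504.09331 — 6 statements merged into one kernel-verified Lean document; each statement's English description precedes it below -/
import Mathlib

section
/- There exist universal constants C1, C2 > 0 such that for all real κ with 0 < κ ≤ 1/2 and all natural numbers m ≥ 1, if Z is a chi-squared random variable with m degrees of freedom, then (C1·κ)^m ≤ Pr[Z ≤ κ²·m] ≤ (C2·κ)^m. -/
/-!
Lower bound: if every coordinate of a standard Gaussian vector lies in `[-κ, κ]` then the sum
of squares is at most `κ² m`; the standard Gaussian density `φ` is at least `φ(1/2)` on
`[-1/2, 1/2]`, so each coordinate lands in `[-κ, κ]` with probability at least `2 φ(1/2) κ`.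

Upper bound: the Chernoff bound at `t = -1 / (2 κ²)` with the chi-squared moment generating
function `E[exp (t Z)] = (1 - 2t)^(-m/2)` gives `exp (m / 2) (1 + κ⁻²)^(-m/2) ≤ (√e κ)^m`.
-/

open MeasureTheory ProbabilityTheory

/-- The chi-squared distribution with `m` degrees of freedom: law of the sum of squares of
`m` i.i.d. standard Gaussians. -/
noncomputable def chiSq (m : ℕ) : Measure ℝ :=
  (Measure.pi (fun _ : Fin m => gaussianReal 0 1)).map (fun x => ∑ i, (x i) ^ 2)

open Real Set

lemma gaussianPDFReal_zero_one_le_of_abs_le {x y : ℝ} (h : |x| ≤ |y|) :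
    gaussianPDFReal 0 1 y ≤ gaussianPDFReal 0 1 x := by
  have hsq : x ^ 2 ≤ y ^ 2 := sq_le_sq.mpr h
  simp only [gaussianPDFReal_def, sub_zero, NNReal.coe_one]
  gcongr

lemma two_mul_gaussianPDFReal_le_gaussianReal_Icc {κ : ℝ} (hκ : 0 ≤ κ) :
    2 * κ * gaussianPDFReal 0 1 κ ≤ (gaussianReal 0 1).real (Icc (-κ) κ) := by
  rw [measureReal_def, gaussianReal_apply_eq_integral 0 one_ne_zero,
    ENNReal.toReal_ofReal (setIntegral_nonneg measurableSet_Icc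
      fun x _ => gaussianPDFReal_nonneg 0 1 x)]
  calc 2 * κ * gaussianPDFReal 0 1 κ = ∫ _ in Icc (-κ) κ, gaussianPDFReal 0 1 κ := by
        rw [setIntegral_const, measureReal_def, Real.volume_Icc,
          ENNReal.toReal_ofReal (by linarith), smul_eq_mul]
        ring
    _ ≤ ∫ x in Icc (-κ) κ, gaussianPDFReal 0 1 x :=
        setIntegral_mono_on (integrable_const _) (integrable_gaussianPDFReal 0 1).restrict
          measurableSet_Icc fun x hx =>
            gaussianPDFReal_zero_one_le_of_abs_le (by rw [abs_of_nonneg hκ]; exact abs_le.mpr hx)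

/-- For `t ≥ 1 / 2` both sides are junk zeros: the integral of a non-integrable function and
`√` of a non-positive number. -/
lemma integral_exp_mul_sq_gaussianReal (t : ℝ) :
    ∫ y, exp (t * y ^ 2) ∂gaussianReal 0 1 = (√(1 - 2 * t))⁻¹ := by
  have hexp : ∀ y : ℝ, gaussianPDFReal 0 1 y • exp (t * y ^ 2)
      = (√(2 * π))⁻¹ * exp (-(1 / 2 - t) * y ^ 2) := by
    intro y
    rw [gaussianPDFReal_def, smul_eq_mul, mul_assoc, ← exp_add]
    simp only [sub_zero, NNReal.coe_one, mul_one]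
    ring_nf
  rw [integral_gaussianReal_eq_integral_smul one_ne_zero]
  simp_rw [hexp]
  rw [integral_const_mul, integral_gaussian, ← sqrt_inv, ← sqrt_mul (by positivity), ← sqrt_inv]
  congr 1
  field_simp

lemma measurable_sum_sq (m : ℕ) : Measurable fun x : Fin m → ℝ => ∑ i, x i ^ 2 := by
  fun_prop

instance (m : ℕ) : IsProbabilityMeasure (chiSq m) :=
  Measure.isProbabilityMeasure_map (measurable_sum_sq m).aemeasurable

lemma chiSq_apply (m : ℕ) {s : Set ℝ} (hs : MeasurableSet s) :
    chiSq m s = Measure.pi (fun _ : Fin m => gaussianReal 0 1)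
      ((fun x => ∑ i, x i ^ 2) ⁻¹' s) :=
  Measure.map_apply (measurable_sum_sq m) hs

lemma gaussianReal_Icc_pow_le_chiSq_Iic (m : ℕ) (κ : ℝ) :
    (gaussianReal 0 1).real (Icc (-κ) κ) ^ m ≤ (chiSq m).real (Iic (κ ^ 2 * m)) := by
  have hcube : (univ.pi fun _ : Fin m => Icc (-κ) κ) ⊆
      (fun x => ∑ i, x i ^ 2) ⁻¹' Iic (κ ^ 2 * m) := by
    intro x hx
    simp only [mem_univ_pi] at hx
    calc ∑ i, x i ^ 2 ≤ ∑ _i : Fin m, κ ^ 2 :=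
          Finset.sum_le_sum fun i _ => sq_le_sq' (hx i).1 (hx i).2
      _ = κ ^ 2 * m := by simp [mul_comm]
  rw [measureReal_def, measureReal_def, chiSq_apply m measurableSet_Iic, ← ENNReal.toReal_pow]
  refine ENNReal.toReal_mono (measure_ne_top _ _) ?_
  calc gaussianReal 0 1 (Icc (-κ) κ) ^ m
      = Measure.pi (fun _ : Fin m => gaussianReal 0 1) (univ.pi fun _ => Icc (-κ) κ) := by
        rw [Measure.pi_pi, Finset.prod_const, Finset.card_univ, Fintype.card_fin]
    _ ≤ _ := measure_mono hcube

lemma mgf_chiSq (m : ℕ) (t : ℝ) :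
    mgf id (chiSq m) t = (√(1 - 2 * t))⁻¹ ^ m := by
  rw [chiSq, mgf_id_map (measurable_sum_sq m).aemeasurable, mgf]
  simp_rw [Finset.mul_sum, exp_sum]
  rw [integral_fintype_prod_eq_pow (fun y => exp (t * y ^ 2)), Fintype.card_fin,
    integral_exp_mul_sq_gaussianReal t]

lemma chiSq_real_Iic_le (m : ℕ) {κ : ℝ} (hκ : 0 < κ) :
    (chiSq m).real (Iic (κ ^ 2 * m)) ≤ (exp (1 / 2) * κ) ^ m := by
  set t : ℝ := -(2 * κ ^ 2)⁻¹
  have ht : t < 0 := neg_neg_of_pos (by positivity)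
  have hmgf := mgf_chiSq m t
  have hint : Integrable (fun z => exp (t * id z)) (chiSq m) :=
    mgf_pos_iff.mp (by rw [hmgf]; exact pow_pos (inv_pos.mpr (sqrt_pos.mpr (by linarith))) m)
  have hsqrt : (√(1 + (κ ^ 2)⁻¹))⁻¹ ≤ κ := by
    rw [inv_le_comm₀ (by positivity) hκ]
    refine Real.le_sqrt_of_sq_le ?_
    rw [inv_pow]
    linarith
  calc (chiSq m).real (Iic (κ ^ 2 * m)) ≤ exp (-t * (κ ^ 2 * m)) * mgf id (chiSq m) t :=
        measure_le_le_exp_mul_mgf _ ht.le hint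
    _ = (exp (1 / 2) * (√(1 + (κ ^ 2)⁻¹))⁻¹) ^ m := by
        have hexp : -t * (κ ^ 2 * m) = m * (1 / 2) := by simp only [t]; field_simp
        have hvar : 1 - 2 * t = 1 + (κ ^ 2)⁻¹ := by simp only [t]; ring
        rw [hmgf, mul_pow, ← exp_nat_mul, hexp, hvar]
    _ ≤ (exp (1 / 2) * κ) ^ m := by gcongr

theorem stmt0 :
    ∃ C1 C2 : ℝ, 0 < C1 ∧ 0 < C2 ∧
      ∀ (κ : ℝ) (m : ℕ), 0 < κ → κ ≤ 1 / 2 → 1 ≤ m →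
        (C1 * κ) ^ m ≤ (chiSq m {z | z ≤ κ ^ 2 * m}).toReal ∧
          (chiSq m {z | z ≤ κ ^ 2 * m}).toReal ≤ (C2 * κ) ^ m := by
  refine ⟨2 * gaussianPDFReal 0 1 (1 / 2), exp (1 / 2),
    mul_pos two_pos (gaussianPDFReal_pos 0 1 _ one_ne_zero), exp_pos _, ?_⟩
  intro κ m hκ hκ_le _
  change _ ≤ (chiSq m).real (Iic (κ ^ 2 * m)) ∧ (chiSq m).real (Iic (κ ^ 2 * m)) ≤ _
  refine ⟨?_, chiSq_real_Iic_le m hκ⟩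
  calc (2 * gaussianPDFReal 0 1 (1 / 2) * κ) ^ m ≤ (2 * κ * gaussianPDFReal 0 1 κ) ^ m := by
        have hpdf := gaussianPDFReal_zero_one_le_of_abs_le (x := κ) (y := 1 / 2)
          (by rw [abs_of_pos hκ, abs_of_pos one_half_pos]; exact hκ_le)
        have hpdf_nonneg := gaussianPDFReal_nonneg 0 1 (1 / 2)
        gcongr ?_ ^ m
        nlinarith
    _ ≤ (gaussianReal 0 1).real (Icc (-κ) κ) ^ m := by
        have hpdf_nonneg := gaussianPDFReal_nonneg 0 1 κ
        gcongr
        exact two_mul_gaussianPDFReal_le_gaussianReal_Icc hκ.le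
    _ ≤ (chiSq m).real (Iic (κ ^ 2 * m)) := gaussianReal_Icc_pow_le_chiSq_Iic m κ
end

section
/- For all natural numbers m ≥ 1 and all reals γ, r > 0, the number of points of the scaled lattice γ·Z^m inside the closed Euclidean ball of radius r in R^m is at most (r·√(2πe)/(γ·√m) + √(2πe)/2)^m. -/
/-!
Cubes of side `γ` centred at the points of `γ ℤ^m` are pairwise disjoint, and those centred
in the ball of radius `r` lie in the ball of radius `r + γ √m / 2`, half a diagonal further out.
Comparing volumes bounds the count by `vol B(r + γ √m / 2) / γ^m`. Finally
`vol B(R) = π^(m/2) R^m / Γ(m/2 + 1) ≤ (2πe/m)^(m/2) R^m`, because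
`Γ(x + 1) ≥ ∫_x^∞ t^x e^(-t) dt ≥ x^x e^(-x)`.
-/

open MeasureTheory Set Real Metric

theorem Real.rpow_mul_exp_neg_le_Gamma_add_one {x : ℝ} (hx : 0 ≤ x) :
    x ^ x * exp (-x) ≤ Gamma (x + 1) := by
  have hint : IntegrableOn (fun t : ℝ ↦ exp (-t) * t ^ x) (Ioi 0) := by
    simpa using GammaIntegral_convergent (s := x + 1) (by linarith)
  calc x ^ x * exp (-x) = ∫ t in Ioi x, exp (-t) * x ^ x := by
        rw [integral_mul_const, integral_exp_neg_Ioi, mul_comm]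
    _ ≤ ∫ t in Ioi x, exp (-t) * t ^ x :=
        setIntegral_mono_on ((integrableOn_exp_neg_Ioi x).mul_const _)
          (hint.mono_set (Ioi_subset_Ioi hx)) measurableSet_Ioi fun t ht ↦
          mul_le_mul_of_nonneg_left (rpow_le_rpow hx ht.le hx) (exp_pos _).le
    _ ≤ ∫ t in Ioi 0, exp (-t) * t ^ x :=
        setIntegral_mono_set hint
          (ae_restrict_of_forall_mem measurableSet_Ioi fun t ht ↦
            mul_nonneg (exp_pos _).le (rpow_nonneg (le_of_lt ht) _))
          (Ioi_subset_Ioi hx).eventuallyLE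
    _ = Gamma (x + 1) := by rw [Gamma_eq_integral (by linarith), add_sub_cancel_right]

theorem Real.sqrt_pi_pow_div_Gamma_le {n : ℕ} (hn : n ≠ 0) :
    √π ^ n / Gamma (n / 2 + 1) ≤ (√(2 * π * exp 1) / √n) ^ n := by
  have hGamma := rpow_mul_exp_neg_le_Gamma_add_one (x := n / 2) (by positivity)
  have hrpow : (n / 2 : ℝ) ^ (n / 2 : ℝ) * exp (-(n / 2)) = (√n / √(2 * exp 1)) ^ n := by
    rw [← sqrt_div' _ (by positivity), sqrt_eq_rpow, ← rpow_natCast,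
      ← rpow_mul (by positivity), div_mul_eq_div_div, one_div_mul_eq_div,
      div_rpow (y := exp 1) (by positivity) (by positivity), exp_one_rpow,
      exp_neg, ← div_eq_mul_inv]
  rw [hrpow] at hGamma
  rw [div_le_iff₀ (Gamma_pos_of_pos (by positivity))]
  calc √π ^ n = (√(2 * π * exp 1) / √n) ^ n * (√n / √(2 * exp 1)) ^ n := by
        have : √(n : ℝ) ≠ 0 := by positivity
        rw [← mul_pow, sqrt_mul' _ (exp_pos 1).le, sqrt_mul zero_le_two, sqrt_mul zero_le_two]
        field_simp
    _ ≤ _ := by gcongr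

theorem EuclideanSpace.volume_closedBall_le {ι : Type*} [Fintype ι] [Nonempty ι]
    (x : EuclideanSpace ℝ ι) {R : ℝ} (hR : 0 ≤ R) :
    volume (closedBall x R) ≤
      ENNReal.ofReal ((R * √(2 * π * exp 1) / √(Fintype.card ι)) ^ Fintype.card ι) := by
  rw [EuclideanSpace.volume_closedBall, ← ENNReal.ofReal_pow hR,
    ← ENNReal.ofReal_mul (by positivity)]
  refine ENNReal.ofReal_le_ofReal ?_
  rw [mul_div_assoc, mul_pow]
  gcongr
  exact sqrt_pi_pow_div_Gamma_le Fintype.card_ne_zero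

section Packing

variable {ι : Type*}

def halfOpenCube (x : EuclideanSpace ℝ ι) (γ : ℝ) : Set (EuclideanSpace ℝ ι) :=
  WithLp.ofLp ⁻¹' univ.pi fun i ↦ Ico (x i - γ / 2) (x i + γ / 2)

theorem measurableSet_halfOpenCube [Fintype ι] (x : EuclideanSpace ℝ ι) (γ : ℝ) :
    MeasurableSet (halfOpenCube x γ) :=
  (MeasurableSet.univ_pi fun _ ↦ measurableSet_Ico).preimage
    (PiLp.volume_preserving_ofLp ι).measurable

theorem volume_halfOpenCube [Fintype ι] (x : EuclideanSpace ℝ ι) (γ : ℝ) :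
    volume (halfOpenCube x γ) = ENNReal.ofReal γ ^ Fintype.card ι := by
  rw [halfOpenCube, (PiLp.volume_preserving_ofLp ι).measure_preimage
    (MeasurableSet.univ_pi fun _ ↦ measurableSet_Ico).nullMeasurableSet, volume_pi_pi]
  simp_rw [Real.volume_Ico, add_sub_sub_cancel, add_halves, Finset.prod_const, Finset.card_univ]

theorem halfOpenCube_subset_closedBall [Fintype ι] (x : EuclideanSpace ℝ ι) {γ : ℝ}
    (hγ : 0 ≤ γ) : halfOpenCube x γ ⊆ closedBall x (γ * √(Fintype.card ι) / 2) := by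
  intro y hy
  simp only [halfOpenCube, mem_preimage, mem_univ_pi, mem_Ico] at hy
  have hcoord : ∀ i, dist (y i) (x i) ^ 2 ≤ (γ / 2) ^ 2 := fun i ↦ by
    have := hy i
    gcongr
    rw [Real.dist_eq, abs_le]
    constructor <;> linarith
  rw [mem_closedBall, EuclideanSpace.dist_eq]
  calc √(∑ i, dist (y i) (x i) ^ 2) ≤ √(Fintype.card ι * (γ / 2) ^ 2) := by
        gcongr
        convert Finset.sum_le_card_nsmul _ _ _ fun i _ ↦ hcoord i
        simp
    _ = γ * √(Fintype.card ι) / 2 := by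
        rw [sqrt_mul (Nat.cast_nonneg _), sqrt_sq (by positivity)]
        ring

theorem pairwiseDisjoint_halfOpenCube {S : Set (EuclideanSpace ℝ ι)} {γ : ℝ}
    (hS : S.Pairwise fun x y ↦ ∃ i, γ ≤ |x i - y i|) :
    S.PairwiseDisjoint (halfOpenCube · γ) := by
  intro x hx y hy hxy
  obtain ⟨i, hi⟩ := hS hx hy hxy
  refine Set.disjoint_left.mpr fun z hzx hzy ↦ ?_
  simp only [halfOpenCube, mem_preimage, mem_univ_pi, mem_Ico] at hzx hzy
  have := hzx i
  have := hzy i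
  rcases le_abs.mp hi with hle | hle <;> linarith

theorem ncard_mul_le_volume_closedBall [Fintype ι] {S : Set (EuclideanSpace ℝ ι)}
    {γ r : ℝ} (hγ : 0 ≤ γ) (hS : S.Pairwise fun x y ↦ ∃ i, γ ≤ |x i - y i|)
    (hSr : ∀ x ∈ S, ‖x‖ ≤ r) :
    (S.ncard : ENNReal) * ENNReal.ofReal γ ^ Fintype.card ι ≤
      volume (closedBall (0 : EuclideanSpace ℝ ι) (r + γ * √(Fintype.card ι) / 2)) := by
  by_cases hfin : S.Finite
  · lift S to Finset (EuclideanSpace ℝ ι) using hfin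
    have hcover : ⋃ x ∈ S, halfOpenCube x γ ⊆
        closedBall (0 : EuclideanSpace ℝ ι) (r + γ * √(Fintype.card ι) / 2) :=
      iUnion₂_subset fun x hx ↦
        (halfOpenCube_subset_closedBall x hγ).trans <| closedBall_subset_closedBall' <| by
          rw [dist_zero_right, add_comm]
          gcongr
          exact hSr x hx
    calc ((S : Set (EuclideanSpace ℝ ι)).ncard : ENNReal) * ENNReal.ofReal γ ^ Fintype.card ι
        = ∑ x ∈ S, volume (halfOpenCube x γ) := by simp [volume_halfOpenCube]
      _ = volume (⋃ x ∈ S, halfOpenCube x γ) :=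
        (measure_biUnion_finset (pairwiseDisjoint_halfOpenCube hS)
          fun x _ ↦ measurableSet_halfOpenCube x γ).symm
      _ ≤ _ := measure_mono hcover
  · simp [Set.Infinite.ncard hfin]

theorem exists_le_abs_sub_of_coords_eq_mul_int {x y : EuclideanSpace ℝ ι} {γ : ℝ}
    (hγ : 0 ≤ γ) (hx : ∀ i, ∃ k : ℤ, x i = γ * k) (hy : ∀ i, ∃ k : ℤ, y i = γ * k)
    (hxy : x ≠ y) :
    ∃ i, γ ≤ |x i - y i| := by
  obtain ⟨i, hi⟩ : ∃ i, x i ≠ y i := by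
    by_contra! h
    exact hxy (PiLp.ext h)
  obtain ⟨k, hk⟩ := hx i
  obtain ⟨l, hl⟩ := hy i
  have hkl : (1 : ℝ) ≤ |(k : ℝ) - l| := by
    rw [← Int.cast_sub, ← Int.cast_abs]
    exact_mod_cast Int.one_le_abs (sub_ne_zero.mpr fun h ↦ hi (by rw [hk, hl, h]))
  refine ⟨i, ?_⟩
  rw [hk, hl, ← mul_sub, abs_mul, abs_of_nonneg hγ]
  exact le_mul_of_one_le_right hγ hkl

end Packing

theorem stmt3 (m : ℕ) (hm : 1 ≤ m) (γ r : ℝ) (hγ : 0 < γ) (hr : 0 < r) :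
    (({x : EuclideanSpace ℝ (Fin m) | (∀ i, ∃ k : ℤ, x i = γ * k) ∧ ‖x‖ ≤ r}).ncard : ℝ) ≤
      (r * Real.sqrt (2 * Real.pi * Real.exp 1) / (γ * Real.sqrt m) +
        Real.sqrt (2 * Real.pi * Real.exp 1) / 2) ^ m := by
  have : Nonempty (Fin m) := Fin.pos_iff_nonempty.mp hm
  set S := {x : EuclideanSpace ℝ (Fin m) | (∀ i, ∃ k : ℤ, x i = γ * k) ∧ ‖x‖ ≤ r}
  have hsep : S.Pairwise fun x y ↦ ∃ i, γ ≤ |x i - y i| := fun x hx y hy hxy ↦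
    exists_le_abs_sub_of_coords_eq_mul_int hγ.le hx.1 hy.1 hxy
  have hpack := (ncard_mul_le_volume_closedBall hγ.le hsep fun x hx ↦ hx.2).trans
    (EuclideanSpace.volume_closedBall_le 0 (by positivity))
  rw [Fintype.card_fin, ← ENNReal.ofReal_natCast, ← ENNReal.ofReal_pow hγ.le,
    ← ENNReal.ofReal_mul (by positivity), ENNReal.ofReal_le_ofReal_iff (by positivity)] at hpack
  have hsm : √(m : ℝ) ≠ 0 := by positivity
  calc (S.ncard : ℝ) ≤ ((r + γ * √m / 2) * √(2 * π * exp 1) / √m) ^ m / γ ^ m := by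
        rwa [le_div_iff₀ (by positivity)]
    _ = _ := by
        rw [← div_pow]
        congr 1
        field_simp
end

section
/- For every ρ with 0 < ρ ≤ 1/2 and every natural number n ≥ 1, the n-dimensional Euclidean ball of radius √(ρn) (around any center) contains at most exp(C·n·ρ·log(1/ρ)) integer points, for some universal constant C. -/
/-!
Rankin's trick: for `s ≥ 0` every integer point `v` with `∑ (v i - y i)² ≤ R` has weight
`∏ i, exp (-s (v i - y i)²) ≥ exp (-s R)`, so the number of such points is at most
`exp (s R) * ∏ i, ∑ k, exp (-s (k - y i)²)`. Taking `s = 4 log (1/ρ)`, the inequality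
`|k - round c| ≤ 4 (k - c)²` bounds each one-dimensional theta sum by
`∑ j : ℤ, ρ ^ |j| = (1 + ρ) / (1 - ρ) ≤ 1 + 4ρ`; finally `1 + 4ρ ≤ exp (4ρ)` and
`log (1/ρ) > 1/2` give the constant `12`.
-/

open Finset Real

lemma hasSum_pow_natAbs {ρ : ℝ} (h₀ : 0 ≤ ρ) (h₁ : ρ < 1) :
    HasSum (fun j : ℤ ↦ ρ ^ j.natAbs) ((1 + ρ) / (1 - ρ)) := by
  have hpos := hasSum_geometric_of_lt_one h₀ h₁
  have hneg : HasSum (fun n : ℕ ↦ ρ ^ (n + 1)) (ρ * (1 - ρ)⁻¹) := by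
    simpa only [pow_succ'] using hpos.mul_left ρ
  have hneg' : HasSum (fun n : ℕ ↦ ρ ^ (-(n + 1 : ℤ)).natAbs) (ρ * (1 - ρ)⁻¹) := by
    convert hneg using 3 with n
    omega
  convert hpos.of_nat_of_neg_add_one (f := fun j : ℤ ↦ ρ ^ j.natAbs) hneg' using 1
  field_simp

lemma sum_pow_natAbs_le {ρ : ℝ} (h₀ : 0 ≤ ρ) (h₁ : ρ < 1) (F : Finset ℤ) :
    ∑ j ∈ F, ρ ^ j.natAbs ≤ (1 + ρ) / (1 - ρ) :=
  (hasSum_pow_natAbs h₀ h₁).summable.sum_le_tsum F (fun _ _ ↦ by positivity) |>.trans_eq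
    (hasSum_pow_natAbs h₀ h₁).tsum_eq

lemma abs_sub_round_le_four_mul_sq (k : ℤ) (c : ℝ) :
    |((k - round c : ℤ) : ℝ)| ≤ 4 * ((k : ℝ) - c) ^ 2 := by
  rcases eq_or_ne (k - round c) 0 with h | h
  · rw [h]; simp only [Int.cast_zero, abs_zero]; positivity
  have hm : (1 : ℝ) ≤ |((k - round c : ℤ) : ℝ)| := by
    rw [← Int.cast_abs]; exact_mod_cast Int.one_le_abs h
  have hround := abs_sub_round c
  have htri : |((k - round c : ℤ) : ℝ)| ≤ |(k : ℝ) - c| + |c - round c| := by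
    push_cast; exact abs_sub_le _ _ _
  have hsq : |(k : ℝ) - c| ^ 2 = ((k : ℝ) - c) ^ 2 := sq_abs _
  nlinarith [abs_nonneg ((k : ℝ) - c)]

lemma sum_exp_neg_mul_sq_le {ρ : ℝ} (h₀ : 0 < ρ) (h₁ : ρ ≤ 1 / 2) (F : Finset ℤ) (c : ℝ) :
    ∑ k ∈ F, exp (-(4 * log (1 / ρ)) * ((k : ℝ) - c) ^ 2) ≤ 1 + 4 * ρ := by
  have hlog : log ρ ≤ 0 := log_nonpos h₀.le (by linarith)
  have hterm (k : ℤ) :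
      exp (-(4 * log (1 / ρ)) * ((k : ℝ) - c) ^ 2) ≤ ρ ^ (k - round c).natAbs := by
    calc exp (-(4 * log (1 / ρ)) * ((k : ℝ) - c) ^ 2)
        ≤ exp ((k - round c).natAbs * log ρ) := by
          rw [exp_le_exp, Nat.cast_natAbs, Int.cast_abs, one_div, log_inv]
          linarith [mul_le_mul_of_nonpos_right (abs_sub_round_le_four_mul_sq k c) hlog]
      _ = ρ ^ (k - round c).natAbs := by rw [exp_nat_mul, exp_log h₀]
  calc ∑ k ∈ F, exp (-(4 * log (1 / ρ)) * ((k : ℝ) - c) ^ 2)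
      ≤ ∑ k ∈ F, ρ ^ (k - round c).natAbs := sum_le_sum fun k _ ↦ hterm k
    _ = ∑ j ∈ F.image (· - round c), ρ ^ j.natAbs :=
        (sum_image (f := fun j : ℤ ↦ ρ ^ j.natAbs) fun _ _ _ _ ↦ sub_left_injective.eq_iff.mp).symm
    _ ≤ (1 + ρ) / (1 - ρ) := sum_pow_natAbs_le h₀.le (by linarith) _
    _ ≤ 1 + 4 * ρ := by rw [div_le_iff₀ (by linarith)]; nlinarith

lemma sum_prod_le_prod_sum_image {ι α R : Type*} [Fintype ι] [DecidableEq ι] [DecidableEq α]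
    [CommSemiring R] [PartialOrder R] [IsOrderedRing R]
    (S : Finset (ι → α)) (f : ι → α → R) (hf : ∀ i a, 0 ≤ f i a) :
    ∑ v ∈ S, ∏ i, f i (v i) ≤ ∏ i, ∑ a ∈ S.image (· i), f i a := by
  rw [prod_univ_sum]
  exact sum_le_sum_of_subset_of_nonneg
    (fun v hv ↦ Fintype.mem_piFinset.2 fun i ↦ mem_image_of_mem _ hv)
    (fun _ _ _ ↦ prod_nonneg fun i _ ↦ hf i _)

lemma card_le_exp_mul_prod_sum_exp {ι : Type*} [Fintype ι] [DecidableEq ι]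
    (S : Finset (ι → ℤ)) (y : ι → ℝ) {R s : ℝ} (hs : 0 ≤ s)
    (hS : ∀ v ∈ S, ∑ i, ((v i : ℝ) - y i) ^ 2 ≤ R) :
    (S.card : ℝ) ≤
      exp (s * R) * ∏ i, ∑ k ∈ S.image fun v ↦ v i, exp (-s * (((k : ℤ) : ℝ) - y i) ^ 2) := by
  calc (S.card : ℝ) = ∑ _v ∈ S, 1 := by simp
    _ ≤ ∑ v ∈ S, exp (s * R) * ∏ i, exp (-s * ((v i : ℝ) - y i) ^ 2) := by
        refine sum_le_sum fun v hv ↦ ?_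
        rw [← exp_sum, ← exp_add, ← mul_sum]
        exact one_le_exp (by nlinarith [hS v hv])
    _ = exp (s * R) * ∑ v ∈ S, ∏ i, exp (-s * ((v i : ℝ) - y i) ^ 2) := (mul_sum ..).symm
    _ ≤ _ := mul_le_mul_of_nonneg_left
        (sum_prod_le_prod_sum_image S (fun i k ↦ exp (-s * ((k : ℝ) - y i) ^ 2))
          fun _ _ ↦ (exp_pos _).le) (exp_pos _).le

lemma half_lt_log_one_div {ρ : ℝ} (h₀ : 0 < ρ) (h₁ : ρ ≤ 1 / 2) : 1 / 2 < log (1 / ρ) :=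
  calc (1 : ℝ) / 2 < log 2 := by linarith [log_two_gt_d9]
    _ ≤ log (1 / ρ) := log_le_log (by norm_num) (by rw [le_div_iff₀ h₀]; linarith)

lemma ncard_setOf_sum_sq_sub_le {ι : Type*} [Fintype ι] {ρ : ℝ} (h₀ : 0 < ρ) (h₁ : ρ ≤ 1 / 2)
    (y : ι → ℝ) (R : ℝ) :
    ({v : ι → ℤ | ∑ i, ((v i : ℝ) - y i) ^ 2 ≤ R}.ncard : ℝ) ≤
      exp (4 * log (1 / ρ) * R) * (1 + 4 * ρ) ^ Fintype.card ι := by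
  classical
  set T := {v : ι → ℤ | ∑ i, ((v i : ℝ) - y i) ^ 2 ≤ R}
  obtain hT | hT := T.infinite_or_finite
  · rw [hT.ncard, Nat.cast_zero]; positivity
  have hs : 0 ≤ 4 * log (1 / ρ) := by linarith [half_lt_log_one_div h₀ h₁]
  rw [Set.ncard_eq_toFinset_card T hT]
  refine (card_le_exp_mul_prod_sum_exp _ y hs fun v hv ↦ hT.mem_toFinset.1 hv).trans ?_
  gcongr
  calc _ ≤ ∏ _i : ι, (1 + 4 * ρ) :=
        prod_le_prod (fun _ _ ↦ sum_nonneg fun _ _ ↦ (exp_pos _).le)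
          fun i _ ↦ sum_exp_neg_mul_sq_le h₀ h₁ _ (y i)
    _ = (1 + 4 * ρ) ^ Fintype.card ι := by rw [prod_const, card_univ]

lemma exp_mul_one_add_pow_le {ρ : ℝ} (h₀ : 0 < ρ) (h₁ : ρ ≤ 1 / 2) (n : ℕ) :
    exp (4 * log (1 / ρ) * (ρ * n)) * (1 + 4 * ρ) ^ n ≤ exp (12 * n * ρ * log (1 / ρ)) := by
  have hL := half_lt_log_one_div h₀ h₁
  calc exp (4 * log (1 / ρ) * (ρ * n)) * (1 + 4 * ρ) ^ n
      ≤ exp (4 * log (1 / ρ) * (ρ * n)) * exp (4 * ρ) ^ n := by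
        gcongr
        linarith [add_one_le_exp (4 * ρ)]
    _ = exp (4 * log (1 / ρ) * (ρ * n) + n * (4 * ρ)) := by rw [exp_add, exp_nat_mul]
    _ ≤ exp (12 * n * ρ * log (1 / ρ)) := by
        gcongr
        have : 0 ≤ ρ * n := by positivity
        nlinarith

lemma intPoints_norm_sub_le_sqrt_eq_image {ι : Type*} [Fintype ι] (y : EuclideanSpace ℝ ι) {R : ℝ}
    (hR : 0 ≤ R) :
    {x : EuclideanSpace ℝ ι | (∀ i, ∃ k : ℤ, x i = k) ∧ ‖x - y‖ ≤ √R} =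
      (fun v : ι → ℤ ↦ WithLp.toLp 2 fun i ↦ (v i : ℝ)) ''
        {v | ∑ i, ((v i : ℝ) - y i) ^ 2 ≤ R} := by
  ext x
  simp only [Set.mem_ofPred_eq, Set.mem_image, ← dist_eq_norm, EuclideanSpace.dist_eq,
    Real.dist_eq, sq_abs, sqrt_le_sqrt_iff hR]
  constructor
  · rintro ⟨hint, hx⟩
    choose k hk using hint
    refine ⟨k, by simpa only [← hk] using hx, ?_⟩
    ext i; simp [hk]
  · rintro ⟨v, hv, rfl⟩
    exact ⟨fun i ↦ ⟨v i, rfl⟩, hv⟩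

theorem stmt4 :
    ∃ C : ℝ, 0 < C ∧
      ∀ (ρ : ℝ) (n : ℕ) (y : EuclideanSpace ℝ (Fin n)), 0 < ρ → ρ ≤ 1 / 2 → 1 ≤ n →
        (({x : EuclideanSpace ℝ (Fin n) |
            (∀ i, ∃ k : ℤ, x i = k) ∧ ‖x - y‖ ≤ Real.sqrt (ρ * n)}).ncard : ℝ) ≤
          Real.exp (C * n * ρ * Real.log (1 / ρ)) := by
  refine ⟨12, by norm_num, fun ρ n y h₀ h₁ _ ↦ ?_⟩
  have hinj : Function.Injective fun v : Fin n → ℤ ↦ WithLp.toLp 2 fun i ↦ (v i : ℝ) :=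
    (WithLp.toLp_injective 2).comp Int.cast_injective.comp_left
  rw [intPoints_norm_sub_le_sqrt_eq_image y (by positivity), Set.ncard_image_of_injective _ hinj]
  calc _ ≤ exp (4 * log (1 / ρ) * (ρ * n)) * (1 + 4 * ρ) ^ Fintype.card (Fin n) :=
        ncard_setOf_sum_sq_sub_le h₀ h₁ _ _
    _ ≤ _ := by rw [Fintype.card_fin]; exact exp_mul_one_add_pow_le h₀ h₁ n
end

section
/- Let r ≥ 1 and β ∈ (0,1]. Every r×r real symmetric matrix whose diagonal entries are all 1 and whose off-diagonal entries all lie in the interval [1−β, 1−β+β/(2r)] is positive semidefinite and has determinant at least (β/2)^{r−1}·(β/2 + (1−β)·r). -/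
/-!
Write `M = (1 - β) J + β I + E`, where `J` is the all-ones matrix and `|E i j| ≤ β / (2r)`.
Since `xᵀ J x = (∑ xᵢ)² ≥ 0` and, by Cauchy–Schwarz, `|xᵀ E x| ≤ β / (2r) (∑ |xᵢ|)² ≤ β/2 ‖x‖²`,
the quadratic form of `M` is at least `β/2 ‖x‖²`, so every eigenvalue of `M` is at least `β/2`.
The eigenvalues sum to `tr M = r`, and a product of `r` numbers `≥ c` with given sum `S` is at
least `c ^ (r - 1) (S - (r - 1) c)`, i.e. the extremal case has all but one of them equal to `c`.
-/

open Finset Matrix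

theorem Finset.pow_card_sub_one_mul_add_sum_sub_le_prod {ι : Type*} {s : Finset ι}
    (hs : s.Nonempty) {c : ℝ} (hc : 0 ≤ c) {f : ι → ℝ} (hf : ∀ i ∈ s, c ≤ f i) :
    c ^ (#s - 1) * (c + ∑ i ∈ s, (f i - c)) ≤ ∏ i ∈ s, f i := by
  induction hs using Finset.Nonempty.cons_induction with
  | singleton a => simp
  | cons a s ha hs ih =>
    rw [forall_mem_cons] at hf
    obtain ⟨hfa, hfs⟩ := hf
    have hsum : 0 ≤ ∑ i ∈ s, (f i - c) := sum_nonneg fun i hi => sub_nonneg.2 (hfs i hi)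
    obtain ⟨k, hk⟩ : ∃ k, #s = k + 1 := Nat.exists_eq_add_one.2 hs.card_pos
    have hck : 0 ≤ c ^ k := pow_nonneg hc k
    have ih := ih hfs
    rw [hk, Nat.add_sub_cancel] at ih
    rw [prod_cons, sum_cons, card_cons, hk, Nat.add_sub_cancel, pow_succ]
    nlinarith [mul_le_mul_of_nonneg_left ih (hc.trans hfa),
      mul_nonneg hck (mul_nonneg (sub_nonneg.2 hfa) hsum)]

variable {n : Type*} [Fintype n]

theorem Matrix.abs_dotProduct_mulVec_le {E : Matrix n n ℝ} {c : ℝ} (hc : 0 ≤ c)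
    (hE : ∀ i j, |E i j| ≤ c) (x : n → ℝ) :
    |x ⬝ᵥ (E *ᵥ x)| ≤ c * Fintype.card n * (x ⬝ᵥ x) := by
  have hcs : (∑ i, |x i|) ^ 2 ≤ Fintype.card n * (x ⬝ᵥ x) := by
    simpa [sq_abs, dotProduct, sq] using
      sq_sum_le_card_mul_sum_sq (s := univ) (f := fun i => |x i|)
  calc |x ⬝ᵥ (E *ᵥ x)| = |∑ i, ∑ j, x i * E i j * x j| := by
        simp only [dotProduct, mulVec, mul_sum, mul_assoc]
    _ ≤ ∑ i, ∑ j, |x i| * c * |x j| := by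
        refine (abs_sum_le_sum_abs _ _).trans (sum_le_sum fun i _ => ?_)
        refine (abs_sum_le_sum_abs _ _).trans (sum_le_sum fun j _ => ?_)
        rw [abs_mul, abs_mul]
        gcongr
        exact hE i j
    _ = c * (∑ i, |x i|) ^ 2 := by
        rw [sq, sum_mul_sum, mul_sum]
        refine sum_congr rfl fun i _ => ?_
        rw [mul_sum]
        exact sum_congr rfl fun j _ => by ring
    _ ≤ c * Fintype.card n * (x ⬝ᵥ x) := by
        rw [mul_assoc]; exact mul_le_mul_of_nonneg_left hcs hc

theorem Matrix.IsHermitian.le_eigenvalues_of_le_dotProduct_mulVec {𝕜 : Type*} [RCLike 𝕜]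
    [DecidableEq n] {A : Matrix n n 𝕜} (hA : A.IsHermitian) {c : ℝ}
    (h : ∀ x : n → 𝕜, c * RCLike.re (star x ⬝ᵥ x) ≤ RCLike.re (star x ⬝ᵥ (A *ᵥ x))) (i : n) :
    c ≤ hA.eigenvalues i := by
  have hv : star ⇑(hA.eigenvectorBasis i) ⬝ᵥ ⇑(hA.eigenvectorBasis i) = 1 := by
    rw [dotProduct_comm, ← EuclideanSpace.inner_eq_star_dotProduct, inner_self_eq_norm_sq_to_K,
      hA.eigenvectorBasis.orthonormal.1 i]
    simp
  simpa [hv, hA.eigenvalues_eq i] using h (hA.eigenvectorBasis i)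

theorem Matrix.IsHermitian.pow_mul_add_trace_sub_le_det [Nonempty n] [DecidableEq n]
    {A : Matrix n n ℝ} (hA : A.IsHermitian) {c : ℝ} (hc : 0 ≤ c)
    (h : ∀ i, c ≤ hA.eigenvalues i) :
    c ^ (Fintype.card n - 1) * (c + (A.trace - Fintype.card n * c)) ≤ A.det := by
  have := pow_card_sub_one_mul_add_sum_sub_le_prod univ_nonempty hc fun i _ => h i
  simpa [hA.det_eq_prod_eigenvalues, hA.trace_eq_sum_eigenvalues, sum_sub_distrib] using this

theorem Matrix.half_mul_dotProduct_self_le_dotProduct_mulVec [Nonempty n] {M : Matrix n n ℝ}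
    {β : ℝ} (hβ0 : 0 ≤ β) (hβ1 : β ≤ 1) (hdiag : ∀ i, M i i = 1)
    (hoff : ∀ i j, i ≠ j → M i j ∈ Set.Icc (1 - β) (1 - β + β / (2 * Fintype.card n)))
    (x : n → ℝ) : β / 2 * (x ⬝ᵥ x) ≤ x ⬝ᵥ (M *ᵥ x) := by
  classical
  set E := M - (1 - β) • vecMulVec 1 1 - β • (1 : Matrix n n ℝ) with hE
  have hM : M = (1 - β) • vecMulVec 1 1 + β • 1 + E := by rw [hE]; abel
  have hEbound : ∀ i j, |E i j| ≤ β / (2 * Fintype.card n) := by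
    intro i j
    have hc : 0 ≤ β / (2 * Fintype.card n) := by positivity
    have hEij : E i j = M i j - (1 - β) - if i = j then β else 0 := by simp [hE, one_apply]
    split_ifs at hEij with hij
    · rw [hEij, hij, hdiag]
      simpa using hc
    · obtain ⟨hlo, hhi⟩ := hoff i j hij
      rw [hEij, abs_le]
      constructor <;> linarith
  have hquad : x ⬝ᵥ (M *ᵥ x) = (1 - β) * (∑ i, x i) ^ 2 + β * (x ⬝ᵥ x) + x ⬝ᵥ (E *ᵥ x) := by
    rw [hM]
    simp only [add_mulVec, smul_mulVec, vecMulVec_mulVec, one_mulVec, dotProduct_add,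
      dotProduct_smul, smul_eq_mul, op_smul_eq_mul, dotProduct_one, one_dotProduct]
    ring
  have hEx := (abs_le.1 (abs_dotProduct_mulVec_le (by positivity) hEbound x)).1
  have hcard : β / (2 * Fintype.card n) * Fintype.card n = β / 2 := by
    field_simp [(Fintype.card_pos : 0 < Fintype.card n).ne']
  rw [hcard] at hEx
  nlinarith [mul_nonneg (sub_nonneg.2 hβ1) (sq_nonneg (∑ i, x i))]

theorem stmt5 (r : ℕ) (hr : 1 ≤ r) (β : ℝ) (hβ0 : 0 < β) (hβ1 : β ≤ 1)
    (M : Matrix (Fin r) (Fin r) ℝ) (hsymm : M.IsSymm)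
    (hdiag : ∀ i, M i i = 1)
    (hoff : ∀ i j, i ≠ j → M i j ∈ Set.Icc (1 - β) (1 - β + β / (2 * r))) :
    M.PosSemidef ∧ (β / 2) ^ (r - 1) * (β / 2 + (1 - β) * r) ≤ M.det := by
  have : Nonempty (Fin r) := ⟨⟨0, hr⟩⟩
  have hM : M.IsHermitian := isHermitian_iff_isSymm.2 hsymm
  have hquad := half_mul_dotProduct_self_le_dotProduct_mulVec hβ0.le hβ1 hdiag
    (by simpa using hoff)
  have heig : ∀ i, β / 2 ≤ hM.eigenvalues i :=
    hM.le_eigenvalues_of_le_dotProduct_mulVec fun x => by simpa using hquad x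
  refine ⟨hM.posSemidef_iff_eigenvalues_nonneg.2 fun i => (half_pos hβ0).le.trans (heig i), ?_⟩
  have htrace : M.trace = r := by simp [trace, hdiag]
  calc (β / 2) ^ (r - 1) * (β / 2 + (1 - β) * r)
      ≤ (β / 2) ^ (r - 1) * (β / 2 + (M.trace - r * (β / 2))) := by
        rw [htrace]; gcongr; nlinarith [(Nat.cast_nonneg r : (0 : ℝ) ≤ r)]
    _ ≤ M.det := by simpa using hM.pow_mul_add_trace_sub_le_det (by positivity) heig
end

section
/- Let t ∈ (0,1] and let x₀ be a unit vector in R^n. Every nonzero vector x ∈ R^n whose angle with x₀ is at most arctan(t) lies in the union over all integers i of the closed balls of radius √5·t·(1+t)^i centered at (1+t)^i·x₀. -/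
/-!
Write `r = ⟪x, x₀⟫`. An angle at most `arctan t` forces `r > 0` and puts `x` at distance at most
`t r` from `r • x₀`. Choosing `i` with `(1 + t) ^ i ≤ r < (1 + t) ^ (i + 1)`, Pythagoras gives
`‖x - (1 + t) ^ i • x₀‖² = ‖x - r • x₀‖² + (r - (1 + t) ^ i)² ≤ ((1 + t)² + 1) t² (1 + t) ^ (2 i)`,
and `(1 + t)² + 1 ≤ 5` for `t ≤ 1`.
-/

open Real InnerProductGeometry
open scoped RealInnerProductSpace

section

variable {V : Type*} [NormedAddCommGroup V] [InnerProductSpace ℝ V]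

lemma real_inner_pos_of_angle_lt_pi_div_two {x y : V} (hx : x ≠ 0) (hy : y ≠ 0)
    (h : angle x y < π / 2) : 0 < ⟪x, y⟫ := by
  rw [← cos_angle_mul_norm_mul_norm]
  have hcos : 0 < cos (angle x y) :=
    cos_pos_of_mem_Ioo ⟨by linarith [angle_nonneg x y, pi_pos], h⟩
  have hxy : 0 < ‖x‖ * ‖y‖ := mul_pos (norm_pos_iff.2 hx) (norm_pos_iff.2 hy)
  positivity

lemma real_inner_sub_inner_smul_self_eq_zero {u : V} (hu : ‖u‖ = 1) (x : V) :
    ⟪u, x - ⟪x, u⟫ • u⟫ = 0 := by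
  rw [inner_sub_right, real_inner_smul_right, real_inner_self_eq_norm_sq, hu, real_inner_comm]
  ring

lemma tan_angle_eq_norm_sub_inner_smul_div_inner {u : V} (hu : ‖u‖ = 1) {x : V}
    (hr : 0 < ⟪x, u⟫) : tan (angle x u) = ‖x - ⟪x, u⟫ • u‖ / ⟪x, u⟫ := by
  have horth : ⟪⟪x, u⟫ • u, x - ⟪x, u⟫ • u⟫ = 0 := by
    rw [real_inner_smul_left, real_inner_sub_inner_smul_self_eq_zero hu, mul_zero]
  have h := tan_angle_add_of_inner_eq_zero horth
  rwa [add_sub_cancel, angle_smul_left_of_pos _ _ hr, angle_comm, norm_smul, hu, mul_one,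
    norm_of_nonneg hr.le] at h

lemma norm_sub_inner_smul_le_of_angle_le_arctan {u x : V} (hu : ‖u‖ = 1) (hx : x ≠ 0) {t : ℝ}
    (hangle : angle x u ≤ arctan t) : 0 < ⟪x, u⟫ ∧ ‖x - ⟪x, u⟫ • u‖ ≤ t * ⟪x, u⟫ := by
  have hlt : angle x u < π / 2 := hangle.trans_lt (arctan_lt_pi_div_two t)
  have hr := real_inner_pos_of_angle_lt_pi_div_two hx (norm_ne_zero_iff.1 (by simp [hu])) hlt
  refine ⟨hr, ?_⟩
  have htan : tan (angle x u) ≤ t := by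
    rwa [← arctan_strictMono.le_iff_le,
      arctan_tan (by linarith [angle_nonneg x u, pi_pos]) hlt]
  rwa [tan_angle_eq_norm_sub_inner_smul_div_inner hu hr, div_le_iff₀ hr] at htan

lemma norm_sub_smul_sq_eq {u : V} (hu : ‖u‖ = 1) (x : V) (s : ℝ) :
    ‖x - s • u‖ ^ 2 = ‖x - ⟪x, u⟫ • u‖ ^ 2 + (⟪x, u⟫ - s) ^ 2 := by
  have horth : ⟪x - ⟪x, u⟫ • u, (⟪x, u⟫ - s) • u⟫ = 0 := by
    rw [real_inner_smul_right, real_inner_comm u (x - _),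
      real_inner_sub_inner_smul_self_eq_zero hu, mul_zero]
  rw [show x - s • u = (x - ⟪x, u⟫ • u) + (⟪x, u⟫ - s) • u by rw [sub_smul]; abel, sq, sq,
    norm_add_sq_eq_norm_sq_add_norm_sq_real horth, norm_smul, hu, mul_one, norm_eq_abs,
    ← sq, ← sq, sq_abs]

lemma sq_add_sq_le_five_mul_sq {t r s d : ℝ} (ht0 : 0 < t) (ht1 : t ≤ 1)
    (hsr : s ≤ r) (hrs : r < s * (1 + t)) (hd0 : 0 ≤ d) (hd : d ≤ t * r) :
    d ^ 2 + (r - s) ^ 2 ≤ 5 * t ^ 2 * s ^ 2 := by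
  have hd' : d ≤ t * (s * (1 + t)) := hd.trans (by gcongr)
  have hd'' : d ≤ 2 * t * s := hd'.trans (by nlinarith)
  have hrs' : r - s ≤ t * s := by linarith
  nlinarith [sub_nonneg.2 hsr]

lemma exists_zpow_norm_sub_smul_le {u x : V} (hu : ‖u‖ = 1) {t : ℝ} (ht0 : 0 < t) (ht1 : t ≤ 1)
    (hr : 0 < ⟪x, u⟫) (hd : ‖x - ⟪x, u⟫ • u‖ ≤ t * ⟪x, u⟫) :
    ∃ i : ℤ, ‖x - (1 + t) ^ i • u‖ ≤ √5 * t * (1 + t) ^ i := by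
  obtain ⟨i, hsr, hrs⟩ := exists_mem_Ico_zpow hr (by linarith : (1 : ℝ) < 1 + t)
  rw [zpow_add_one₀ (by positivity)] at hrs
  refine ⟨i, ?_⟩
  have hsq := sq_add_sq_le_five_mul_sq ht0 ht1 hsr hrs (norm_nonneg _) hd
  rw [← norm_sub_smul_sq_eq hu] at hsq
  refine (sq_le_sq₀ (norm_nonneg _) (by positivity)).1 ?_
  rwa [mul_pow, mul_pow, sq_sqrt (by norm_num : (0 : ℝ) ≤ 5)]

end

theorem stmt6 (n : ℕ) (t : ℝ) (ht0 : 0 < t) (ht1 : t ≤ 1)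
    (x₀ x : EuclideanSpace ℝ (Fin n)) (hx₀ : ‖x₀‖ = 1) (hx : x ≠ 0)
    (hangle : InnerProductGeometry.angle x x₀ ≤ Real.arctan t) :
    ∃ i : ℤ, ‖x - (1 + t) ^ i • x₀‖ ≤ Real.sqrt 5 * t * (1 + t) ^ i := by
  obtain ⟨hr, hd⟩ := norm_sub_inner_smul_le_of_angle_le_arctan hx₀ hx hangle
  exact exists_zpow_norm_sub_smul_le hx₀ ht0 ht1 hr hd
end

section
/- Suppose A₁, A₂, B₁, B₂, … are independent real random variables where each A_t satisfies Pr[A_t > m + s] ≤ exp(−c·(√m + s/√m)²) for all s ≥ 0 and each B_t has mean at least 1/4 and satisfies Pr[|B_t| ≥ s] ≤ C·exp(−c·s) for all s > 0 (with universal constants c, C). Then Σ_{t=0}^∞ Pr[A₁ − B₁ − ⋯ − B_t > 2m] ≤ C'·exp(−c'·m) for universal constants C', c' > 0. -/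
/-!
Split the event `2m < A₀ - (B₀ + ⋯ + B_{t-1})` into `m + t/8 < A₀` and
`m - t/8 ≤ -(B₀ + ⋯ + B_{t-1})`. The tail of `A₀` bounds the first by `exp (-c (m + t/4))`.
For the second, the layer-cake formula turns the sub-exponential tail of each `B_k` into a bound
`E[B_k² exp (λ |B_k|)] ≤ K` for `λ ≤ c/4`, hence `E[exp (-λ B_k)] ≤ exp (-λ/4 + λ² K)`, which is
at most `exp (-3λ/16)` once `λ K ≤ 1/16`; a Chernoff bound for the independent sum then gives
`exp (-λ m - λ t/16)`. Both pieces are `exp (-λ m) r^t` with `r = exp (-λ/16) < 1`, and the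
geometric series in `t` sums to `O(exp (-λ m))`.
-/

open MeasureTheory ProbabilityTheory Real Set

lemma exp_le_one_add_add_sq_mul_exp_abs (x : ℝ) : exp x ≤ 1 + x + x ^ 2 * exp |x| := by
  have h : (1 - x) * exp x ≤ 1 := by
    have := mul_le_mul_of_nonneg_right (add_one_le_exp (-x)) (exp_pos x).le
    rwa [← exp_add, neg_add_cancel, exp_zero, neg_add_eq_sub] at this
  rcases le_or_gt 0 x with hx | hx
  · rw [abs_of_nonneg hx]
    nlinarith [exp_pos x, mul_le_mul_of_nonneg_left h hx]
  · rw [abs_of_neg hx]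
    have h' : exp x ≤ 1 + x + x ^ 2 := by nlinarith [exp_pos x]
    nlinarith [one_le_exp (neg_nonneg.2 hx.le), sq_nonneg x]

lemma sq_mul_exp_mul_abs_le {c l : ℝ} (hc : 0 < c) (hl : l ≤ c / 4) (x : ℝ) :
    x ^ 2 * exp (l * |x|) ≤ 16 / c ^ 2 * exp (3 * c / 4 * |x|) := by
  have hz : c / 4 * |x| ≤ exp (c / 4 * |x|) := by linarith [add_one_le_exp (c / 4 * |x|)]
  have hsq : (c / 4 * |x|) ^ 2 ≤ exp (c / 2 * |x|) := by
    calc (c / 4 * |x|) ^ 2 ≤ exp (c / 4 * |x|) ^ 2 := by gcongr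
      _ = exp (c / 2 * |x|) := by rw [← exp_nat_mul]; ring_nf
  calc x ^ 2 * exp (l * |x|) = 16 / c ^ 2 * (c / 4 * |x|) ^ 2 * exp (l * |x|) := by
        rw [mul_pow, sq_abs]; field_simp; norm_num
    _ ≤ 16 / c ^ 2 * exp (c / 2 * |x|) * exp (c / 4 * |x|) := by gcongr
    _ = 16 / c ^ 2 * exp (3 * c / 4 * |x|) := by rw [mul_assoc, ← exp_add]; ring_nf

lemma exp_neg_mul_sq_sqrt_add_le {c l m : ℝ} (hm : 0 < m) (hl0 : 0 ≤ l) (hl : l ≤ c) (t : ℕ) :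
    exp (-c * (√m + t / 8 / √m) ^ 2) ≤ exp (-l * m) * exp (-l / 16) ^ t := by
  have hsqrt : 0 < √m := sqrt_pos.2 hm
  have hexpand : m + t / 4 ≤ (√m + t / 8 / √m) ^ 2 := by
    have hcross : √m * (t / 8 / √m) = t / 8 := mul_div_cancel₀ _ hsqrt.ne'
    nlinarith [sq_sqrt hm.le, sq_nonneg (t / 8 / √m)]
  rw [← exp_nat_mul, ← exp_add]
  gcongr
  have ht : (0 : ℝ) ≤ t := t.cast_nonneg
  nlinarith [mul_le_mul_of_nonneg_left hexpand (hl0.trans hl)]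

lemma tsum_le_of_le_mul_geometric {f : ℕ → ℝ} {a r : ℝ} (hf0 : ∀ n, 0 ≤ f n)
    (hf : ∀ n, f n ≤ a * r ^ n) (hr0 : 0 ≤ r) (hr1 : r < 1) : ∑' n, f n ≤ a / (1 - r) := by
  have hg : Summable fun n => a * r ^ n := (summable_geometric_of_lt_one hr0 hr1).mul_left a
  calc ∑' n, f n ≤ ∑' n, a * r ^ n := (hg.of_nonneg_of_le hf0 hf).tsum_le_tsum hf hg
    _ = a / (1 - r) := by rw [tsum_mul_left, tsum_geometric_of_lt_one hr0 hr1, div_eq_mul_inv]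

section SubexpTail

variable {Ω : Type*} [MeasurableSpace Ω] {μ : Measure Ω}

def HasSubexpTail (X : Ω → ℝ) (μ : Measure Ω) (C c : ℝ) : Prop :=
  ∀ s > 0, μ.real {ω | s ≤ |X ω|} ≤ C * exp (-c * s)

variable {X : Ω → ℝ} {a c C l : ℝ}

lemma HasSubexpTail.const_nonneg (h : HasSubexpTail X μ C c) : 0 ≤ C := by
  have h1 := h 1 one_pos
  nlinarith [measureReal_nonneg (μ := μ) (s := {ω | 1 ≤ |X ω|}), exp_pos (-c * 1)]

lemma HasSubexpTail.neg (h : HasSubexpTail X μ C c) : HasSubexpTail (fun ω => -X ω) μ C c :=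
  fun s hs => by simp only [abs_neg]; exact h s hs

variable [IsProbabilityMeasure μ]

lemma HasSubexpTail.lintegral_exp_mul_abs_le (h : HasSubexpTail X μ C c) (hX : AEMeasurable X μ)
    (ha : 0 ≤ a) (hac : a < c) :
    ∫⁻ ω, ENNReal.ofReal (exp (a * |X ω|)) ∂μ ≤ ENNReal.ofReal (1 + a * C / (c - a)) := by
  have := h.const_nonneg
  have hcont : Continuous fun t => a * exp (a * t) := by fun_prop
  have hFTC (y : ℝ) : ∫ t in 0..y, a * exp (a * t) = exp (a * y) - 1 := by
    have hderiv (t : ℝ) : HasDerivAt (fun t => exp (a * t)) (a * exp (a * t)) t := by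
      simpa [mul_comm] using ((hasDerivAt_id t).const_mul a).exp
    rw [intervalIntegral.integral_eq_sub_of_hasDerivAt (fun t _ => hderiv t)
      (hcont.intervalIntegrable _ _), mul_zero, exp_zero]
  have hlayer := lintegral_comp_eq_lintegral_meas_le_mul μ (f := fun ω => |X ω|)
    (g := fun t => a * exp (a * t)) (.of_forall fun ω => abs_nonneg _) hX.abs
    (fun t _ => hcont.intervalIntegrable _ _) (.of_forall fun t => by positivity)
  simp only [hFTC] at hlayer
  have htail_le (t : ℝ) (ht : t ∈ Ioi 0) : μ {ω | t ≤ |X ω|} * ENNReal.ofReal (a * exp (a * t))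
      ≤ ENNReal.ofReal (a * C * exp (-(c - a) * t)) := by
    rw [← ofReal_measureReal, ← ENNReal.ofReal_mul measureReal_nonneg]
    apply ENNReal.ofReal_le_ofReal
    calc μ.real {ω | t ≤ |X ω|} * (a * exp (a * t)) ≤ C * exp (-c * t) * (a * exp (a * t)) := by
          gcongr; exact h t ht
      _ = a * C * exp (-(c - a) * t) := by
          rw [show -(c - a) * t = -c * t + a * t by ring, exp_add]; ring
  have hint : IntegrableOn (fun t => a * C * exp (-(c - a) * t)) (Ioi 0) :=
    (exp_neg_integrableOn_Ioi 0 (sub_pos.2 hac)).const_mul _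
  calc ∫⁻ ω, ENNReal.ofReal (exp (a * |X ω|)) ∂μ
      = ∫⁻ ω, ENNReal.ofReal (exp (a * |X ω|) - 1) + 1 ∂μ := lintegral_congr fun ω => by
        rw [← ENNReal.ofReal_one, ← ENNReal.ofReal_add (by simp; positivity) zero_le_one,
          sub_add_cancel]
    _ = ∫⁻ ω, ENNReal.ofReal (exp (a * |X ω|) - 1) ∂μ + 1 := by
        rw [lintegral_add_right _ measurable_const, lintegral_const, measure_univ, mul_one]
    _ ≤ ENNReal.ofReal (∫ t in Ioi 0, a * C * exp (-(c - a) * t)) + 1 := by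
        rw [hlayer, ofReal_integral_eq_lintegral_ofReal hint (.of_forall fun t => by positivity)]
        exact add_le_add_left (setLIntegral_mono' measurableSet_Ioi htail_le) 1
    _ = ENNReal.ofReal (1 + a * C / (c - a)) := by
        rw [integral_const_mul, integral_exp_mul_Ioi (by linarith), mul_zero, exp_zero, add_comm,
          ENNReal.ofReal_add zero_le_one (by have := sub_pos.2 hac; positivity),
          ENNReal.ofReal_one]
        congr 2
        field_simp

lemma HasSubexpTail.integrable_exp_mul_abs (h : HasSubexpTail X μ C c) (hX : AEMeasurable X μ)
    (ha : 0 ≤ a) (hac : a < c) : Integrable (fun ω => exp (a * |X ω|)) μ := by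
  refine ⟨(hX.abs.const_mul a).exp.aestronglyMeasurable, ?_⟩
  rw [hasFiniteIntegral_iff_ofReal (.of_forall fun ω => (exp_pos _).le)]
  exact (h.lintegral_exp_mul_abs_le hX ha hac).trans_lt ENNReal.ofReal_lt_top

lemma HasSubexpTail.integral_exp_mul_abs_le (h : HasSubexpTail X μ C c) (hX : AEMeasurable X μ)
    (ha : 0 ≤ a) (hac : a < c) : ∫ ω, exp (a * |X ω|) ∂μ ≤ 1 + a * C / (c - a) := by
  have := h.const_nonneg
  rw [← ENNReal.ofReal_le_ofReal_iff (by have := sub_pos.2 hac; positivity),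
    ofReal_integral_eq_lintegral_ofReal (h.integrable_exp_mul_abs hX ha hac)
      (.of_forall fun ω => (exp_pos _).le)]
  exact h.lintegral_exp_mul_abs_le hX ha hac

lemma HasSubexpTail.integrable_exp_mul (h : HasSubexpTail X μ C c) (hX : AEMeasurable X μ)
    (hlc : |l| < c) : Integrable (fun ω => exp (l * X ω)) μ := by
  refine (h.integrable_exp_mul_abs hX (abs_nonneg l) hlc).mono'
    (hX.const_mul l).exp.aestronglyMeasurable (.of_forall fun ω => ?_)
  rw [norm_of_nonneg (exp_pos _).le, ← abs_mul]
  exact exp_le_exp.2 (le_abs_self _)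

lemma HasSubexpTail.mgf_neg_le (h : HasSubexpTail X μ C c) (hX : Integrable X μ) (hc : 0 < c)
    (hl : 0 ≤ l) (hlc : l ≤ c / 4) :
    mgf (fun ω => -X ω) μ l ≤ exp (-l * μ[X] + l ^ 2 * (16 * (1 + 3 * C) / c ^ 2)) := by
  have hXm := hX.aestronglyMeasurable.aemeasurable
  have hexp := h.integrable_exp_mul_abs (a := 3 * c / 4) hXm (by positivity) (by linarith)
  have hbound := h.integral_exp_mul_abs_le (a := 3 * c / 4) hXm (by positivity) (by linarith)
  rw [show 3 * c / 4 * C / (c - 3 * c / 4) = 3 * C by field_simp; ring] at hbound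
  have hpt (ω : Ω) :
      exp (l * -X ω) ≤ 1 + -l * X ω + l ^ 2 * (16 / c ^ 2) * exp (3 * c / 4 * |X ω|) := by
    have h := exp_le_one_add_add_sq_mul_exp_abs (l * -X ω)
    rw [abs_mul, abs_neg, abs_of_nonneg hl, mul_pow, neg_sq] at h
    nlinarith [sq_mul_exp_mul_abs_le hc hlc (X ω), sq_nonneg l]
  have hint_lin : Integrable (fun ω => 1 + -l * X ω) μ :=
    (integrable_const 1).add (hX.const_mul (-l))
  calc mgf (fun ω => -X ω) μ l
      ≤ ∫ ω, 1 + -l * X ω + l ^ 2 * (16 / c ^ 2) * exp (3 * c / 4 * |X ω|) ∂μ :=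
        integral_mono (h.neg.integrable_exp_mul hXm.neg (by rw [abs_of_nonneg hl]; linarith))
          (hint_lin.add (hexp.const_mul _)) hpt
    _ = 1 + -l * μ[X] + l ^ 2 * (16 / c ^ 2) * ∫ ω, exp (3 * c / 4 * |X ω|) ∂μ := by
        rw [integral_add hint_lin (hexp.const_mul _),
          integral_add (integrable_const 1) (hX.const_mul (-l)), integral_const_mul,
          integral_const_mul, integral_const, probReal_univ, one_smul]
    _ ≤ 1 + (-l * μ[X] + l ^ 2 * (16 * (1 + 3 * C) / c ^ 2)) := by
        have := mul_le_mul_of_nonneg_left hbound (by positivity : 0 ≤ l ^ 2 * (16 / c ^ 2))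
        linarith [show l ^ 2 * (16 / c ^ 2) * (1 + 3 * C) = l ^ 2 * (16 * (1 + 3 * C) / c ^ 2) by
          ring]
    _ ≤ _ := add_one_le_exp _ |>.trans_eq' (add_comm _ _)

end SubexpTail

section Deviation

variable {Ω : Type*} [MeasurableSpace Ω] {μ : Measure Ω} [IsProbabilityMeasure μ]

lemma measureReal_sum_range_ge_le {X : ℕ → Ω → ℝ} (h_indep : iIndepFun X μ)
    (h_meas : ∀ k, AEMeasurable (X k) μ) {l r : ℝ} (hl : 0 ≤ l)
    (h_int : ∀ k, Integrable (fun ω => exp (l * X k ω)) μ) (h_mgf : ∀ k, mgf (X k) μ l ≤ r)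
    (ε : ℝ) (n : ℕ) :
    μ.real {ω | ε ≤ ∑ k ∈ Finset.range n, X k ω} ≤ exp (-l * ε) * r ^ n := by
  have hmgf : mgf (∑ k ∈ Finset.range n, X k) μ l = ∏ k ∈ Finset.range n, mgf (X k) μ l :=
    h_indep.mgf_sum₀ h_meas _
  -- the integral of `exp (l * ∑ X k)` is a product of positive mgfs, hence nonzero
  have hint : Integrable (fun ω => exp (l * (∑ k ∈ Finset.range n, X k) ω)) μ :=
    .of_integral_ne_zero <| show mgf _ μ l ≠ 0 by
      rw [hmgf]; exact (Finset.prod_pos fun k _ => mgf_pos (h_int k)).ne'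
  calc μ.real {ω | ε ≤ ∑ k ∈ Finset.range n, X k ω}
      = μ.real {ω | ε ≤ (∑ k ∈ Finset.range n, X k) ω} := by simp only [Finset.sum_apply]
    _ ≤ exp (-l * ε) * mgf (∑ k ∈ Finset.range n, X k) μ l := measure_ge_le_exp_mul_mgf ε hl hint
    _ ≤ exp (-l * ε) * r ^ n := by
        rw [hmgf]
        gcongr
        calc ∏ k ∈ Finset.range n, mgf (X k) μ l ≤ ∏ _k ∈ Finset.range n, r :=
              Finset.prod_le_prod (fun k _ => mgf_nonneg) (fun k _ => h_mgf k)
          _ = r ^ n := by rw [Finset.prod_const, Finset.card_range]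

lemma measureReal_le_neg_sum_range_le {B : ℕ → Ω → ℝ} {b c C l : ℝ} (h_indep : iIndepFun B μ)
    (h_int : ∀ k, Integrable (B k) μ) (h_mean : ∀ k, b ≤ μ[B k])
    (h_tail : ∀ k, HasSubexpTail (B k) μ C c) (hc : 0 < c) (hl : 0 ≤ l) (hlc : l ≤ c / 4)
    (ε : ℝ) (n : ℕ) :
    μ.real {ω | ε ≤ -∑ k ∈ Finset.range n, B k ω} ≤
      exp (-l * ε) * exp (-l * b + l ^ 2 * (16 * (1 + 3 * C) / c ^ 2)) ^ n := by
  simp only [← Finset.sum_neg_distrib]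
  refine measureReal_sum_range_ge_le (h_indep.comp (fun _ => Neg.neg) fun _ => measurable_neg)
    (fun k => (h_int k).neg.aestronglyMeasurable.aemeasurable) hl
    (fun k => (h_tail k).neg.integrable_exp_mul (h_int k).neg.aestronglyMeasurable.aemeasurable
      (by rw [abs_of_nonneg hl]; linarith))
    (fun k => ((h_tail k).mgf_neg_le (h_int k) hc hl hlc).trans ?_) ε n
  exact exp_le_exp.2 (by nlinarith [h_mean k])

lemma measureReal_add_lt_sub_le (f g : Ω → ℝ) (x y : ℝ) :
    μ.real {ω | x + y < f ω - g ω} ≤ μ.real {ω | x < f ω} + μ.real {ω | y ≤ -g ω} := by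
  refine (measureReal_mono fun ω hω => ?_).trans (measureReal_union_le _ _)
  by_contra h
  simp only [mem_union, mem_ofPred_eq, not_or, not_lt, not_le] at h hω
  linarith

end Deviation

theorem stmt17 (c C : ℝ) (hc : 0 < c) (hC : 0 < C) :
    ∃ C' c' : ℝ, 0 < C' ∧ 0 < c' ∧
      ∀ (Ω : Type) (_ : MeasurableSpace Ω) (μ : Measure Ω), IsProbabilityMeasure μ →
        ∀ (m : ℕ), 1 ≤ m →
          ∀ (A B : ℕ → Ω → ℝ),
            iIndepFun (Sum.elim A B) μ →
            (∀ t (s : ℝ), 0 ≤ s →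
              (μ {ω | (m : ℝ) + s < A t ω}).toReal ≤
                Real.exp (-c * (Real.sqrt m + s / Real.sqrt m) ^ 2)) →
            (∀ t, 1 / 4 ≤ ∫ ω, B t ω ∂μ) →
            (∀ t (s : ℝ), 0 < s →
              (μ {ω | s ≤ |B t ω|}).toReal ≤ C * Real.exp (-c * s)) →
            ∑' t : ℕ, (μ {ω | 2 * (m : ℝ) <
                A 0 ω - ∑ k ∈ Finset.range t, B k ω}).toReal ≤
              C' * Real.exp (-c' * m) := by
  set K := 16 * (1 + 3 * C) / c ^ 2
  set l := min (c / 4) (1 / (16 * K))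
  have hl : 0 < l := lt_min (by positivity) (by positivity)
  have hlc : l ≤ c / 4 := min_le_left _ _
  -- `16 l K ≤ 1` makes the mgf bound `exp (-l/4 + l² K)` at most `exp (-3l/16)`
  have hlK : l * (16 * K) ≤ 1 := (le_div_iff₀ (by positivity)).1 (min_le_right _ _)
  set r := exp (-l / 16)
  have hr1 : r < 1 := exp_lt_one_iff.2 (by linarith)
  refine ⟨2 / (1 - r), l, div_pos two_pos (by linarith), hl, ?_⟩
  intro Ω _ μ _ m hm A B hindep hA hBmean hBtail
  have hm0 : (0 : ℝ) < m := by exact_mod_cast hm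
  have hBint (k : ℕ) : Integrable (B k) μ :=
    .of_integral_ne_zero (by linarith [hBmean k] : ∫ ω, B k ω ∂μ ≠ 0)
  have hterm (t : ℕ) : μ.real {ω | 2 * (m : ℝ) < A 0 ω - ∑ k ∈ Finset.range t, B k ω}
      ≤ 2 * exp (-l * m) * r ^ t := by
    have hsplit := measureReal_add_lt_sub_le (μ := μ) (A 0) (fun ω => ∑ k ∈ Finset.range t, B k ω)
      (m + t / 8) (m - t / 8)
    rw [show (m + t / 8 : ℝ) + (m - t / 8) = 2 * m by ring] at hsplit
    have hA_le : μ.real {ω | m + t / 8 < A 0 ω} ≤ exp (-l * m) * r ^ t :=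
      (hA 0 (t / 8) (by positivity)).trans (exp_neg_mul_sq_sqrt_add_le hm0 hl.le (by linarith) t)
    have hB_le : μ.real {ω | m - t / 8 ≤ -∑ k ∈ Finset.range t, B k ω} ≤ exp (-l * m) * r ^ t :=
      calc _ ≤ exp (-l * (m - t / 8)) * exp (-l * (1 / 4) + l ^ 2 * K) ^ t :=
            measureReal_le_neg_sum_range_le (hindep.precomp Sum.inr_injective) hBint hBmean
              (fun k => hBtail k) hc hl.le hlc _ t
        _ ≤ exp (-l * (m - t / 8)) * exp (-(3 / 16) * l) ^ t := by gcongr; nlinarith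
        _ = exp (-l * m) * r ^ t := by
            rw [← exp_nat_mul, ← exp_nat_mul, ← exp_add, ← exp_add]; ring_nf
    linarith
  calc _ ≤ 2 * exp (-l * m) / (1 - r) :=
        tsum_le_of_le_mul_geometric (fun t => ENNReal.toReal_nonneg) hterm (exp_pos _).le hr1
    _ = 2 / (1 - r) * exp (-l * m) := by ring
end
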